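/- Let X be a discrete metric space with bounded geometry, S > R > 0, and suppose diagonal isometries V, W : ℓ²(X) → ℓ²(X) ⊗ ℂⁿ satisfy V δ_x, W δ_x ∈ ℂδ_x ⊗ ℂⁿ for all x. If a ∈ B(ℓ²(X) ⊗ ℂⁿ) has propagation at most R (viewing matrix entries in B(ℂⁿ)), then W* a V has propagation at most R, and ‖ψ_S(W* a V)‖ ≤ ‖ψ_S^{(n)}(a)‖, where ψ_S^{(n)} = ψ_S ⊗ id_{M_n} is the amplified compression map. -/

import Mathlib

/- ℓ²(X, H) is modeled as `lp (fun _ : X => H) 2`; `delta x` is the standard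
basis vector δ_x of ℓ²(X) = ℓ²(X, ℂ); `projSet s` is the orthogonal projection
of ℓ²(X, H) onto the coordinates in the finite set `s` (for a ball `N(x,S)` this
is the projection `P_x` onto ℓ²(N(x,S))).  The matrix coefficient
a_{y,z} = ⟨a δ_z, δ_y⟩ (linear in the first variable, as in the paper) is
`⟪delta y, a (delta z)⟫_ℂ` in Mathlib's convention (conjugate-linear in the
first slot), and the mathematicians' inner product ⟨u, v⟩ is `⟪v, u⟫_ℂ`. -/

noncomputable section
open scoped InnerProductSpace ComplexOrder ENNReal

attribute [local instance] Classical.propDecidable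

abbrev l2 (X : Type*) (H : Type*) [NormedAddCommGroup H] [InnerProductSpace ℂ H] :
    Type _ := lp (fun _ : X => H) 2

variable {X : Type*} {H : Type*} [NormedAddCommGroup H] [InnerProductSpace ℂ H]

/-- standard basis vector δ_x of ℓ²(X). -/
def delta (x : X) : l2 X ℂ := lp.single 2 x 1

/-- evaluation at a point, as a continuous linear map ℓ²(X,H) → H. -/
def evalCLM (x : X) : l2 X H →L[ℂ] H :=
  LinearMap.mkContinuous
    { toFun := fun f => f x
      map_add' := fun f g => by simp [lp.coeFn_add]
      map_smul' := fun c f => by simp [lp.coeFn_smul] }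
    1 (fun f => by
      show ‖f x‖ ≤ 1 * ‖f‖
      simpa using lp.norm_apply_le_norm (by norm_num) f x)

/-- insertion at a point, as a continuous linear map H → ℓ²(X,H). -/
def singleCLM (x : X) : H →L[ℂ] l2 X H :=
  LinearMap.mkContinuous
    { toFun := fun v => lp.single 2 x v
      map_add' := fun v w => by
        apply lp.ext
        funext j
        by_cases h : j = x
        · subst h; simp [lp.single_apply_self, lp.coeFn_add]
        · simp [lp.single_apply_ne 2 x _ h, lp.coeFn_add]
      map_smul' := fun c v => by simpa using lp.single_smul 2 x v c }
    1 (fun v => by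
      have : ‖(lp.single 2 x v : l2 X H)‖ = ‖v‖ := by
        simpa using lp.norm_single (p := 2) (by norm_num) (fun _ : X => v) x
      simp [this])

/-- orthogonal projection of ℓ²(X,H) onto the coordinates in a finite set. -/
def projSet (s : Finset X) : l2 X H →L[ℂ] l2 X H :=
  ∑ y ∈ s, (singleCLM y) ∘L (evalCLM y)

@[simp]
lemma evalCLM_apply (x : X) (f : l2 X H) : evalCLM x f = f x := rfl

@[simp]
lemma singleCLM_apply (x : X) (v : H) : singleCLM x v = lp.single 2 x v := rfl

lemma projSet_apply (s : Finset X) (f : l2 X H) :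
    projSet s f = ∑ z ∈ s, lp.single 2 z (f z) := by
  simp [projSet]

lemma projSet_single (s : Finset X) {y : X} (hy : y ∈ s) (v : H) :
    projSet s (lp.single 2 y v) = lp.single 2 y v := by
  rw [projSet_apply, Finset.sum_eq_single_of_mem y hy fun z _ hzy => ?_, lp.single_apply_self]
  simp [hzy]

lemma isIdempotentElem_projSet (s : Finset X) :
    IsIdempotentElem (projSet s : l2 X H →L[ℂ] l2 X H) := by
  refine ContinuousLinearMap.ext fun f => ?_
  change projSet s (projSet s f) = projSet s f
  rw [projSet_apply s f, map_sum]
  exact Finset.sum_congr rfl fun z hz => projSet_single (H := H) s hz _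

variable [CompleteSpace H]

lemma adjoint_singleCLM (x : X) :
    ContinuousLinearMap.adjoint (singleCLM x : H →L[ℂ] l2 X H) = evalCLM x := by
  symm
  rw [ContinuousLinearMap.eq_adjoint_iff]
  exact fun f v => (lp.inner_single_right x v f).symm

lemma isSelfAdjoint_projSet (s : Finset X) :
    IsSelfAdjoint (projSet s : l2 X H →L[ℂ] l2 X H) := by
  rw [ContinuousLinearMap.isSelfAdjoint_iff', projSet, map_sum]
  refine Finset.sum_congr rfl fun y _ => ?_
  rw [ContinuousLinearMap.adjoint_comp, adjoint_singleCLM, ← adjoint_singleCLM y,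
    ContinuousLinearMap.adjoint_adjoint]

lemma norm_projSet_le (s : Finset X) : ‖(projSet s : l2 X H →L[ℂ] l2 X H)‖ ≤ 1 :=
  IsStarProjection.norm_le _ ⟨isIdempotentElem_projSet s, isSelfAdjoint_projSet s⟩

lemma opNorm_le_one_of_isometry {𝕜 E F : Type*} [NontriviallyNormedField 𝕜]
    [SeminormedAddCommGroup E] [SeminormedAddCommGroup F] [NormedSpace 𝕜 E] [NormedSpace 𝕜 F]
    {A : E →L[𝕜] F} (hA : Isometry A) : ‖A‖ ≤ 1 :=
  A.opNorm_le_bound zero_le_one fun f => by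
    rw [(AddMonoidHomClass.isometry_iff_norm A).mp hA f, one_mul]

lemma opNorm_comp_comp_le_of_le_one {𝕜 E F G K : Type*} [NontriviallyNormedField 𝕜]
    [SeminormedAddCommGroup E] [SeminormedAddCommGroup F] [SeminormedAddCommGroup G]
    [SeminormedAddCommGroup K] [NormedSpace 𝕜 E] [NormedSpace 𝕜 F] [NormedSpace 𝕜 G]
    [NormedSpace 𝕜 K] {A : G →L[𝕜] K} {B : E →L[𝕜] F} (hA : ‖A‖ ≤ 1) (hB : ‖B‖ ≤ 1)
    (T : F →L[𝕜] G) : ‖A ∘L T ∘L B‖ ≤ ‖T‖ :=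
  calc ‖A ∘L T ∘L B‖ ≤ ‖A‖ * (‖T‖ * ‖B‖) :=
        (A.opNorm_comp_le _).trans (mul_le_mul_of_nonneg_left (T.opNorm_comp_le B) (norm_nonneg A))
    _ ≤ 1 * (‖T‖ * 1) := by gcongr
    _ = ‖T‖ := by ring

section Diagonal

variable {E : Type*} [NormedAddCommGroup E] [InnerProductSpace ℂ E]

lemma projSet_comp_comp_projSet_of_diagonal {V : l2 X ℂ →L[ℂ] l2 X E}
    (hV : ∀ x, ∃ η : E, V (delta x) = lp.single 2 x η) (s : Finset X) :
    projSet s ∘L V ∘L projSet s = V ∘L projSet s := by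
  refine ContinuousLinearMap.ext fun f => ?_
  change projSet s (V (projSet s f)) = V (projSet s f)
  rw [projSet_apply s f, map_sum, map_sum]
  refine Finset.sum_congr rfl fun y hy => ?_
  obtain ⟨η, hη⟩ := hV y
  have hsingle : (lp.single 2 y (f y) : l2 X ℂ) = f y • delta y := by
    rw [delta, ← lp.single_smul, smul_eq_mul, mul_one]
  rw [hsingle, map_smul, hη, map_smul, projSet_single s hy]

variable [CompleteSpace E]

lemma projSet_comp_adjoint_comp_projSet_of_diagonal {W : l2 X ℂ →L[ℂ] l2 X E}
    (hW : ∀ x, ∃ η : E, W (delta x) = lp.single 2 x η) (s : Finset X) :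
    projSet s ∘L ContinuousLinearMap.adjoint W ∘L projSet s =
      projSet s ∘L ContinuousLinearMap.adjoint W := by
  simpa only [ContinuousLinearMap.adjoint_comp, (isSelfAdjoint_projSet _).adjoint_eq,
    ContinuousLinearMap.comp_assoc] using
    congrArg ContinuousLinearMap.adjoint (projSet_comp_comp_projSet_of_diagonal hW s)

lemma inner_delta_adjoint_comp_comp_delta_eq_zero {V W : l2 X ℂ →L[ℂ] l2 X E}
    {a : l2 X E →L[ℂ] l2 X E} {y z : X} (hVz : ∃ η : E, V (delta z) = lp.single 2 z η)
    (hWy : ∃ η : E, W (delta y) = lp.single 2 y η)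
    (ha : ∀ v : E, (a (lp.single 2 z v) : ∀ _ : X, E) y = 0) :
    ⟪delta y, (ContinuousLinearMap.adjoint W ∘L a ∘L V) (delta z)⟫_ℂ = 0 := by
  obtain ⟨η₁, hη₁⟩ := hVz
  obtain ⟨η₂, hη₂⟩ := hWy
  rw [ContinuousLinearMap.comp_apply, ContinuousLinearMap.adjoint_inner_right,
    ContinuousLinearMap.comp_apply, hη₁, hη₂, lp.inner_single_left, ha, inner_zero_right]

/-- Diagonal maps commute with the projections onto finite sets of points, so the compression
of `W† a V` factors through the compression of `a`. -/
lemma opNorm_projSet_comp_adjoint_comp_comp_le {V W : l2 X ℂ →L[ℂ] l2 X E}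
    (hV : ∀ x, ∃ η : E, V (delta x) = lp.single 2 x η)
    (hW : ∀ x, ∃ η : E, W (delta x) = lp.single 2 x η) (hVn : ‖V‖ ≤ 1) (hWn : ‖W‖ ≤ 1)
    (a : l2 X E →L[ℂ] l2 X E) (s : Finset X) :
    ‖projSet s ∘L (ContinuousLinearMap.adjoint W ∘L a ∘L V) ∘L projSet s‖ ≤
      ‖projSet s ∘L a ∘L projSet s‖ := by
  set P : l2 X ℂ →L[ℂ] l2 X ℂ := projSet s
  set Q : l2 X E →L[ℂ] l2 X E := projSet s
  have hfactor : P ∘L (ContinuousLinearMap.adjoint W ∘L a ∘L V) ∘L P =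
      (P ∘L ContinuousLinearMap.adjoint W) ∘L (Q ∘L a ∘L Q) ∘L (V ∘L P) := by
    have hQV := DFunLike.congr_fun (projSet_comp_comp_projSet_of_diagonal hV s)
    have hPW := DFunLike.congr_fun (projSet_comp_adjoint_comp_projSet_of_diagonal hW s)
    ext1 f
    simp only [ContinuousLinearMap.comp_apply] at hQV hPW ⊢
    rw [hQV, hPW]
  have hPWn : ‖P ∘L ContinuousLinearMap.adjoint W‖ ≤ 1 :=
    (P.opNorm_comp_le _).trans <| mul_le_one₀ (norm_projSet_le s) (norm_nonneg _)
      (by rwa [ContinuousLinearMap.adjoint.norm_map])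
  have hVPn : ‖V ∘L P‖ ≤ 1 :=
    (V.opNorm_comp_le _).trans <| mul_le_one₀ hVn (norm_nonneg _) (norm_projSet_le s)
  rw [hfactor]
  exact opNorm_comp_comp_le_of_le_one hPWn hVPn _

end Diagonal

theorem stmt14_general {X : Type*} [MetricSpace X]
    (hfin : ∀ (x : X) (r : ℝ), (Metric.closedBall x r).Finite)
    (n : ℕ) (R S : ℝ)
    (V W : l2 X ℂ →L[ℂ] l2 X (EuclideanSpace ℂ (Fin n)))
    (hViso : Isometry V) (hWiso : Isometry W)
    (hV : ∀ x : X, ∃ η : EuclideanSpace ℂ (Fin n), V (delta x) = lp.single 2 x η)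
    (hW : ∀ x : X, ∃ η : EuclideanSpace ℂ (Fin n), W (delta x) = lp.single 2 x η)
    (a : l2 X (EuclideanSpace ℂ (Fin n)) →L[ℂ] l2 X (EuclideanSpace ℂ (Fin n)))
    (hprop : ∀ y z : X, R < dist y z → ∀ v : EuclideanSpace ℂ (Fin n),
      (a (lp.single 2 z v) : ∀ _ : X, EuclideanSpace ℂ (Fin n)) y = 0) :
    (∀ y z : X, R < dist y z →
      ⟪delta y, ((ContinuousLinearMap.adjoint W) ∘L a ∘L V) (delta z)⟫_ℂ = 0) ∧
    (⨆ x : X, ‖projSet (hfin x S).toFinset ∘L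
        ((ContinuousLinearMap.adjoint W) ∘L a ∘L V) ∘L projSet (hfin x S).toFinset‖) ≤
      ⨆ x : X, ‖projSet (hfin x S).toFinset ∘L a ∘L projSet (hfin x S).toFinset‖ :=
  ⟨fun y z hyz => inner_delta_adjoint_comp_comp_delta_eq_zero (hV z) (hW y) (hprop y z hyz),
    ciSup_mono
      ⟨‖a‖, Set.forall_mem_range.2 fun _ =>
        opNorm_comp_comp_le_of_le_one (norm_projSet_le _) (norm_projSet_le _) a⟩
      fun _ => opNorm_projSet_comp_adjoint_comp_comp_le hV hW (opNorm_le_one_of_isometry hViso)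
        (opNorm_le_one_of_isometry hWiso) a _⟩

/-- compressing an operator a on ℓ²(X, ℂⁿ) of propagation ≤ R by
diagonal isometries V, W yields W* a V of propagation ≤ R on ℓ²(X) with
‖ψ_S(W* a V)‖ ≤ ‖ψ_S⁽ⁿ⁾(a)‖ (both norms being the sup over x of the norms of the
compressions to the closed S-balls). -/
theorem stmt14 {X : Type*} [MetricSpace X]
    (hfin : ∀ (x : X) (r : ℝ), (Metric.closedBall x r).Finite)
    (n : ℕ) (R S : ℝ) (hR : 0 < R) (hRS : R < S)
    (V W : l2 X ℂ →L[ℂ] l2 X (EuclideanSpace ℂ (Fin n)))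
    (hViso : Isometry V) (hWiso : Isometry W)
    (hV : ∀ x : X, ∃ η : EuclideanSpace ℂ (Fin n), V (delta x) = lp.single 2 x η)
    (hW : ∀ x : X, ∃ η : EuclideanSpace ℂ (Fin n), W (delta x) = lp.single 2 x η)
    (a : l2 X (EuclideanSpace ℂ (Fin n)) →L[ℂ] l2 X (EuclideanSpace ℂ (Fin n)))
    (hprop : ∀ y z : X, R < dist y z → ∀ v : EuclideanSpace ℂ (Fin n),
      (a (lp.single 2 z v) : ∀ _ : X, EuclideanSpace ℂ (Fin n)) y = 0) :
    (∀ y z : X, R < dist y z →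
      ⟪delta y, ((ContinuousLinearMap.adjoint W) ∘L a ∘L V) (delta z)⟫_ℂ = 0) ∧
    (⨆ x : X, ‖projSet (hfin x S).toFinset ∘L
        ((ContinuousLinearMap.adjoint W) ∘L a ∘L V) ∘L projSet (hfin x S).toFinset‖) ≤
      ⨆ x : X, ‖projSet (hfin x S).toFinset ∘L a ∘L projSet (hfin x S).toFinset‖ :=
  stmt14_general hfin n R S V W hViso hWiso hV hW a hprop
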